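/- Fix an integer ℓ ≥ 2, and let A : ℝ² → Matrix (Fin 2) (Fin 2) ℝ be A(x₁,x₂) = !![x₁, x₂^ℓ; x₂^ℓ, x₁*x₂]. Suppose Φ : ℝ² → ℝ² is smooth on a neighborhood of 0 with Φ(0) = 0 and fderiv ℝ Φ 0 invertible, and X : ℝ² → Matrix (Fin 2) (Fin 2) ℝ is smooth on that neighborhood with X x invertible there, such that A(Φ x) = (X x)ᵀ * A x * (X x) for all x in the neighborhood. Then det (fderiv ℝ Φ 0) > 0, i.e., Φ preserves the orientation of ℝ². -/

import Mathlib

attribute [local instance] Matrix.normedAddCommGroup Matrix.normedSpace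

open scoped Matrix

/-!
The determinant `x₁²x₂ - x₂^(2ℓ)` of `A` starts with the cubic `x₁²x₂`, and
`det (A ∘ Φ) = (det X)² det A`. Comparing cubic terms along rays through `0` gives
`c (L v) = (det X(0))² c v` for `L = DΦ(0)` and `c v = v₁²v₂`, while the `(0,0)` entry of the
identity shows that the first row of `L` is `(X₀₀(0)², 0)`. Writing `L = !![a, 0; c, d]` and
evaluating at `v = (1, ±1)` gives `a⁴ d = (det X(0))² > 0`, so `det L = a d > 0` since `a ≥ 0`.
-/

open Filter Topology

section RayLimits

variable {E F : Type*} [NormedAddCommGroup E] [NormedSpace ℝ E]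
  [NormedAddCommGroup F] [NormedSpace ℝ F]

lemma tendsto_smul_nhdsNE_zero (v : E) :
    Tendsto (fun t : ℝ => t • v) (𝓝[≠] 0) (𝓝 0) := by
  simpa using ((continuous_id.smul continuous_const).tendsto (0 : ℝ)).mono_left
    (nhdsWithin_le_nhds (s := {(0 : ℝ)}ᶜ)) (f := fun t : ℝ => t • v)

lemma HasFDerivAt.tendsto_inv_smul_apply_smul {Φ : E → F} {L : E →L[ℝ] F}
    (hΦ : HasFDerivAt Φ L 0) (hΦ0 : Φ 0 = 0) (v : E) :
    Tendsto (fun t : ℝ => t⁻¹ • Φ (t • v)) (𝓝[≠] 0) (𝓝 (L v)) := by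
  have hray : HasDerivAt (fun t : ℝ => Φ (t • v)) (L v) 0 :=
    hΦ.comp_hasDerivAt_of_eq 0 (by simpa using (hasDerivAt_id (0 : ℝ)).smul_const v) (by simp)
  refine (hasDerivAt_iff_tendsto_slope.1 hray).congr fun t => ?_
  simp [slope_def_module, hΦ0]

end RayLimits

lemma LinearMap.det_prod_eq {R : Type*} [CommRing R] (f : R × R →ₗ[R] R × R) :
    LinearMap.det f = (f (1, 0)).1 * (f (0, 1)).2 - (f (0, 1)).1 * (f (1, 0)).2 := by
  rw [← LinearMap.det_toMatrix (Module.Basis.finTwoProd R), Matrix.det_fin_two]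
  simp [LinearMap.toMatrix_apply]

def classNineMatrix (ℓ : ℕ) (p : ℝ × ℝ) : Matrix (Fin 2) (Fin 2) ℝ :=
  !![p.1, p.2 ^ ℓ; p.2 ^ ℓ, p.1 * p.2]

lemma transpose_mul_classNineMatrix_smul_mul_apply_zero_zero {ℓ : ℕ} (hℓ : ℓ ≠ 0)
    (M : Matrix (Fin 2) (Fin 2) ℝ) (t : ℝ) (q : ℝ × ℝ) :
    (Mᵀ * classNineMatrix ℓ (t • q) * M) 0 0
      = t * (q.1 * M 0 0 ^ 2 + 2 * t ^ (ℓ - 1) * q.2 ^ ℓ * (M 0 0 * M 1 0)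
          + t * q.1 * q.2 * M 1 0 ^ 2) := by
  obtain ⟨k, rfl⟩ := Nat.exists_eq_add_one_of_ne_zero hℓ
  simp [classNineMatrix, Matrix.mul_apply, Fin.sum_univ_two, mul_pow]
  ring

lemma det_classNineMatrix_smul {ℓ : ℕ} (hℓ : 2 ≤ ℓ) (t : ℝ) (q : ℝ × ℝ) :
    (classNineMatrix ℓ (t • q)).det
      = t ^ 3 * (q.1 ^ 2 * q.2 - t ^ (2 * ℓ - 3) * q.2 ^ (2 * ℓ)) := by
  obtain ⟨k, hk⟩ : ∃ k, 2 * ℓ = k + 3 := ⟨2 * ℓ - 3, by omega⟩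
  rw [classNineMatrix, Matrix.det_fin_two_of, ← pow_add, ← two_mul, hk,
    Nat.add_sub_cancel]
  simp only [Prod.smul_fst, Prod.smul_snd, smul_eq_mul]
  ring

section Isotropy

variable {ℓ : ℕ} {Φ : ℝ × ℝ → ℝ × ℝ} {L : ℝ × ℝ →L[ℝ] ℝ × ℝ}
  {X : ℝ × ℝ → Matrix (Fin 2) (Fin 2) ℝ}

lemma fst_apply_eq_of_transpose_mul_classNineMatrix_mul (hℓ : 2 ≤ ℓ)
    (hΦ : HasFDerivAt Φ L 0) (hΦ0 : Φ 0 = 0) (hX : ContinuousAt X 0)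
    (heq : ∀ᶠ x in 𝓝 0, classNineMatrix ℓ (Φ x) = (X x)ᵀ * classNineMatrix ℓ x * X x)
    (v : ℝ × ℝ) : (L v).1 = X 0 0 0 ^ 2 * v.1 := by
  set M : ℝ → Matrix (Fin 2) (Fin 2) ℝ := fun t => X (t • v)
  have hM : ContinuousAt M 0 := hX.comp_of_eq (by fun_prop) (zero_smul ℝ v)
  have hM00 := (continuous_id.matrix_elem 0 0).continuousAt.comp hM
  have hM10 := (continuous_id.matrix_elem 1 0).continuousAt.comp hM
  set G : ℝ → ℝ := fun t => v.1 * M t 0 0 ^ 2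
    + 2 * t ^ (ℓ - 1) * v.2 ^ ℓ * (M t 0 0 * M t 1 0) + t * v.1 * v.2 * M t 1 0 ^ 2
  have hG : ContinuousAt G 0 := by
    simp only [G]
    fun_prop
  have hG0 : G 0 = X 0 0 0 ^ 2 * v.1 := by
    simp [G, M, zero_pow (by omega : ℓ - 1 ≠ 0), mul_comm]
  have hident : (fun t : ℝ => (t⁻¹ • Φ (t • v)).1) =ᶠ[𝓝[≠] 0] G := by
    filter_upwards [tendsto_smul_nhdsNE_zero v heq, self_mem_nhdsWithin] with t ht ht0
    have h00 := congrFun (congrFun ht 0) 0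
    rw [transpose_mul_classNineMatrix_smul_mul_apply_zero_zero (by omega)] at h00
    simp only [classNineMatrix, Matrix.of_apply, Matrix.cons_val', Matrix.cons_val_zero,
      Matrix.empty_val', Matrix.cons_val_fin_one] at h00
    rw [Prod.smul_fst, h00, smul_eq_mul, inv_mul_cancel_left₀ ht0]
  have hlim := (continuous_fst.tendsto _).comp (hΦ.tendsto_inv_smul_apply_smul hΦ0 v)
  exact tendsto_nhds_unique (hlim.congr' hident) (hG0 ▸ hG.tendsto.mono_left nhdsWithin_le_nhds)

lemma sq_fst_mul_snd_apply_eq_of_transpose_mul_classNineMatrix_mul (hℓ : 2 ≤ ℓ)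
    (hΦ : HasFDerivAt Φ L 0) (hΦ0 : Φ 0 = 0) (hX : ContinuousAt X 0)
    (heq : ∀ᶠ x in 𝓝 0, classNineMatrix ℓ (Φ x) = (X x)ᵀ * classNineMatrix ℓ x * X x)
    (v : ℝ × ℝ) : (L v).1 ^ 2 * (L v).2 = (X 0).det ^ 2 * (v.1 ^ 2 * v.2) := by
  set F : ℝ × ℝ → ℝ → ℝ := fun q t => q.1 ^ 2 * q.2 - t ^ (2 * ℓ - 3) * q.2 ^ (2 * ℓ)
  set p : ℝ → ℝ × ℝ := fun t => t⁻¹ • Φ (t • v)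
  have hp : Tendsto p (𝓝[≠] 0) (𝓝 (L v)) := hΦ.tendsto_inv_smul_apply_smul hΦ0 v
  have hid : Tendsto (fun t : ℝ => t) (𝓝[≠] 0) (𝓝 0) := nhdsWithin_le_nhds
  have hpow : Tendsto (fun t : ℝ => t ^ (2 * ℓ - 3)) (𝓝[≠] 0) (𝓝 0) := by
    simpa [zero_pow (by omega : 2 * ℓ - 3 ≠ 0)] using hid.pow (2 * ℓ - 3)
  have hlhs : Tendsto (fun t => F (p t) t) (𝓝[≠] 0) (𝓝 ((L v).1 ^ 2 * (L v).2)) := by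
    simpa [F] using
      ((hp.fst_nhds.pow 2).mul hp.snd_nhds).sub (hpow.mul (hp.snd_nhds.pow (2 * ℓ)))
  have hdet : Tendsto (fun t : ℝ => (X (t • v)).det) (𝓝[≠] 0) (𝓝 (X 0).det) :=
    ((continuous_id.matrix_det.continuousAt.comp hX).tendsto).comp
      (tendsto_smul_nhdsNE_zero v)
  have hrhs : Tendsto (fun t => (X (t • v)).det ^ 2 * F v t) (𝓝[≠] 0)
      (𝓝 ((X 0).det ^ 2 * (v.1 ^ 2 * v.2))) := by
    simpa [F] using (hdet.pow 2).mul (tendsto_const_nhds.sub (hpow.mul tendsto_const_nhds))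
  have hident : (fun t => F (p t) t) =ᶠ[𝓝[≠] 0] fun t => (X (t • v)).det ^ 2 * F v t := by
    filter_upwards [tendsto_smul_nhdsNE_zero v heq, self_mem_nhdsWithin] with t ht ht0
    have hΦt : Φ (t • v) = t • p t := (smul_inv_smul₀ ht0 _).symm
    have hdetΦ := congrArg Matrix.det ht
    rw [Matrix.det_mul, Matrix.det_mul, Matrix.det_transpose, hΦt,
      det_classNineMatrix_smul hℓ, det_classNineMatrix_smul hℓ] at hdetΦ
    exact mul_left_cancel₀ (pow_ne_zero 3 ht0) (by linear_combination hdetΦ)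
  exact tendsto_nhds_unique (hlhs.congr' hident) hrhs

end Isotropy

lemma LinearMap.det_pos_of_fst_apply_of_sq_fst_mul_snd_apply (f : ℝ × ℝ →ₗ[ℝ] ℝ × ℝ)
    {a β : ℝ} (hβ : 0 < β) (hfst : ∀ v, (f v).1 = a ^ 2 * v.1)
    (hcubic : ∀ v, (f v).1 ^ 2 * (f v).2 = β * (v.1 ^ 2 * v.2)) :
    0 < LinearMap.det f := by
  have hplus := hcubic (1, 1)
  have hminus := hcubic (1, -1)
  have h11 : f (1, 1) = f (1, 0) + f (0, 1) := by rw [← map_add]; norm_num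
  have h1m1 : f (1, -1) = f (1, 0) - f (0, 1) := by rw [← map_sub]; norm_num
  rw [hfst, h11, Prod.snd_add] at hplus
  rw [hfst, h1m1, Prod.snd_sub] at hminus
  rw [LinearMap.det_prod_eq, hfst, hfst]
  norm_num at hplus hminus ⊢
  have hkey : a ^ 2 * (a ^ 2 * (f (0, 1)).2) = β := by linear_combination (hplus - hminus) / 2
  exact pos_of_mul_pos_right (hkey ▸ hβ) (sq_nonneg a)

theorem isotropy_orientation_preserving_class9_general (ℓ : ℕ) (hℓ : 2 ≤ ℓ)
    (A : ℝ × ℝ → Matrix (Fin 2) (Fin 2) ℝ)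
    (hA : A = fun p => !![p.1, p.2 ^ ℓ; p.2 ^ ℓ, p.1 * p.2])
    (Φ : ℝ × ℝ → ℝ × ℝ) (X : ℝ × ℝ → Matrix (Fin 2) (Fin 2) ℝ)
    (s : Set (ℝ × ℝ)) (hs : s ∈ nhds (0 : ℝ × ℝ))
    (hΦ : ContDiffOn ℝ (⊤ : ℕ∞) Φ s) (hΦ0 : Φ 0 = 0)
    (hX : ContDiffOn ℝ (⊤ : ℕ∞) X s) (hXinv : ∀ x ∈ s, IsUnit (X x))
    (heq : ∀ x ∈ s, A (Φ x) = (X x)ᵀ * A x * X x) :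
    0 < LinearMap.det ((fderiv ℝ Φ 0) : (ℝ × ℝ) →ₗ[ℝ] (ℝ × ℝ)) := by
  subst hA
  have hΦ' : HasFDerivAt Φ (fderiv ℝ Φ 0) 0 :=
    ((hΦ.contDiffAt hs).differentiableAt (by simp)).hasFDerivAt
  have hX' : ContinuousAt X 0 := (hX.contDiffAt hs).continuousAt
  have heq' : ∀ᶠ x in 𝓝 0, classNineMatrix ℓ (Φ x) = (X x)ᵀ * classNineMatrix ℓ x * X x :=
    eventually_of_mem hs heq
  have hdetX : (X 0).det ≠ 0 :=
    ((Matrix.isUnit_iff_isUnit_det _).mp (hXinv 0 (mem_of_mem_nhds hs))).ne_zero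
  exact LinearMap.det_pos_of_fst_apply_of_sq_fst_mul_snd_apply _ (by positivity)
    (fst_apply_eq_of_transpose_mul_classNineMatrix_mul hℓ hΦ' hΦ0 hX' heq')
    (sq_fst_mul_snd_apply_eq_of_transpose_mul_classNineMatrix_mul hℓ hΦ' hΦ0 hX' heq')

/-- For `A(x₁,x₂) = !![x₁, x₂^ℓ; x₂^ℓ, x₁x₂]` (`ℓ ≥ 2`), any diffeomorphism-germ `Φ` at `0`
in the isotropy group `𝒟_A` (i.e. with `A ∘ Φ = Xᵀ A X` near `0` for an
invertible-matrix-valued `X`) preserves the orientation of `ℝ²`. -/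
theorem isotropy_orientation_preserving_class9 (ℓ : ℕ) (hℓ : 2 ≤ ℓ)
    (A : ℝ × ℝ → Matrix (Fin 2) (Fin 2) ℝ)
    (hA : A = fun p => !![p.1, p.2 ^ ℓ; p.2 ^ ℓ, p.1 * p.2])
    (Φ : ℝ × ℝ → ℝ × ℝ) (X : ℝ × ℝ → Matrix (Fin 2) (Fin 2) ℝ)
    (s : Set (ℝ × ℝ)) (hs : s ∈ nhds (0 : ℝ × ℝ))
    (hΦ : ContDiffOn ℝ (⊤ : ℕ∞) Φ s) (hΦ0 : Φ 0 = 0)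
    (hdΦ : IsUnit (fderiv ℝ Φ 0))
    (hX : ContDiffOn ℝ (⊤ : ℕ∞) X s) (hXinv : ∀ x ∈ s, IsUnit (X x))
    (heq : ∀ x ∈ s, A (Φ x) = (X x)ᵀ * A x * X x) :
    0 < LinearMap.det ((fderiv ℝ Φ 0) : (ℝ × ℝ) →ₗ[ℝ] (ℝ × ℝ)) :=
  isotropy_orientation_preserving_class9_general ℓ hℓ A hA Φ X s hs hΦ hΦ0 hX hXinv heq
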